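/- arXiv:2603.21689 — 3 statements merged into one kernel-verified Lean document; each statement's English description precedes it below -/
import Mathlib

section
/- (Shape of PMP-optimal controls.) Let d ≥ 1, let H₁, …, H_m ∈ M_d(ℂ) be Hermitian, let u : ℝ → ℝ^m be continuous with u(s) ≠ 0 for all s, and set H(s) = Σ_{k=1}^m u_k(s)·H_k. Let U : ℝ → M_d(ℂ) be differentiable with U(0) = I and U'(s) = −i·H(s)·U(s), and let Λ : ℝ → M_d(ℂ) be differentiable with Λ'(s) = −i·H(s)·Λ(s) and Λ(0) = −i·M for a Hermitian matrix M. If the Pontryagin stationarity condition Re Tr(−i·Λ(s)†·H_k·U(s)) = u_k(s)/‖u(s)‖ holds for every s and every k = 1, …, m (where ‖u(s)‖ is the Euclidean norm), then for every s and every k one has u_k(s) = c(s)·Re Tr(U(s)·M·U(s)†·H_k), where c(s) = ‖u(s)‖. -/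
open Matrix

/-- entrywise derivative of `t ↦ (X t)ᴴ * Y t`. -/
lemma magicarp_hasDerivAt_conjT_mul {d : ℕ}
    (X Y : ℝ → Matrix (Fin d) (Fin d) ℂ) (X' Y' : Matrix (Fin d) (Fin d) ℂ) (s : ℝ)
    (hX : ∀ i j, HasDerivAt (fun t => X t i j) (X' i j) s)
    (hY : ∀ i j, HasDerivAt (fun t => Y t i j) (Y' i j) s) (i j : Fin d) :
    HasDerivAt (fun t => ((X t)ᴴ * Y t) i j)
      ((X'ᴴ * Y s + (X s)ᴴ * Y') i j) s := by
  have : ∀ t, ((X t)ᴴ * Y t) i j = ∑ k, star (X t k i) * Y t k j := by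
    intro t; simp [Matrix.mul_apply, Matrix.conjTranspose_apply]
  simp only [this, Matrix.add_apply, Matrix.mul_apply, Matrix.conjTranspose_apply,
    ← Finset.sum_add_distrib]
  exact HasDerivAt.fun_sum fun k _ => ((hX k i).star.mul (hY k j))

/-- Shape of PMP-optimal controls: if the Pontryagin stationarity condition holds,
then the controls are given in feedback form `u_k(s) = c(s)·Re Tr(U(s) M U(s)† H_k)`
with `c(s) = ‖u(s)‖`. -/
theorem magicarp_shape_of_controls
    (d m : ℕ) (hd : 1 ≤ d)
    (Hc : Fin m → Matrix (Fin d) (Fin d) ℂ)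
    (hHherm : ∀ k, (Hc k)ᴴ = Hc k)
    (u : ℝ → EuclideanSpace ℝ (Fin m))
    (hucont : Continuous u)
    (hune : ∀ s, u s ≠ 0)
    (H : ℝ → Matrix (Fin d) (Fin d) ℂ)
    (hH : ∀ s, H s = ∑ k, (u s k : ℂ) • Hc k)
    (U Λ : ℝ → Matrix (Fin d) (Fin d) ℂ)
    (hU0 : U 0 = 1)
    (hU : ∀ s : ℝ, ∀ i j : Fin d,
      HasDerivAt (fun t => U t i j) (((-Complex.I) • (H s * U s)) i j) s)
    (hΛ : ∀ s : ℝ, ∀ i j : Fin d,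
      HasDerivAt (fun t => Λ t i j) (((-Complex.I) • (H s * Λ s)) i j) s)
    (M : Matrix (Fin d) (Fin d) ℂ)
    (hMherm : Mᴴ = M)
    (hΛ0 : Λ 0 = (-Complex.I) • M)
    (hstat : ∀ s : ℝ, ∀ k : Fin m,
      (Matrix.trace ((-Complex.I) • ((Λ s)ᴴ * (Hc k * U s)))).re = u s k / ‖u s‖) :
    ∀ s : ℝ, ∀ k : Fin m,
      u s k = ‖u s‖ * (Matrix.trace (U s * M * (U s)ᴴ * Hc k)).re := by
  -- H s is Hermitian
  have hHs : ∀ s, (H s)ᴴ = H s := by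
    intro s
    rw [hH s]
    simp only [Matrix.conjTranspose_sum, Matrix.conjTranspose_smul, Complex.star_def,
      Complex.conj_ofReal, hHherm]
  -- key cancellation
  have hcancel : ∀ (s : ℝ) (Y : ℝ → Matrix (Fin d) (Fin d) ℂ),
      ((-Complex.I) • (H s * U s))ᴴ * Y s + (U s)ᴴ * ((-Complex.I) • (H s * Y s)) = 0 := by
    intro s Y
    rw [Matrix.conjTranspose_smul, Matrix.conjTranspose_mul, hHs]
    simp only [Matrix.smul_mul, Matrix.mul_smul, star_neg, Complex.star_def,
      Complex.conj_I, neg_neg, mul_assoc]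
    rw [← add_smul]
    simp
  -- constancy of t ↦ (U t)ᴴ * Y t for Y solving the ODE
  have hconst : ∀ (Y : ℝ → Matrix (Fin d) (Fin d) ℂ),
      (∀ s : ℝ, ∀ i j : Fin d,
        HasDerivAt (fun t => Y t i j) (((-Complex.I) • (H s * Y s)) i j) s) →
      ∀ s, (U s)ᴴ * Y s = (U 0)ᴴ * Y 0 := by
    intro Y hY s
    ext i j
    have hd0 : ∀ t : ℝ, HasDerivAt (fun t => ((U t)ᴴ * Y t) i j) 0 t := by
      intro t
      have := magicarp_hasDerivAt_conjT_mul U Y ((-Complex.I) • (H t * U t))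
        ((-Complex.I) • (H t * Y t)) t (hU t) (hY t) i j
      rwa [hcancel t Y, Matrix.zero_apply] at this
    have : (fun t => ((U t)ᴴ * Y t) i j) s = (fun t => ((U t)ᴴ * Y t) i j) 0 :=
      is_const_of_deriv_eq_zero (fun t => (hd0 t).differentiableAt)
        (fun t => (hd0 t).deriv) s 0
    exact this
  have hUU : ∀ s, (U s)ᴴ * U s = 1 := by
    intro s
    rw [hconst U hU s, hU0]; simp
  have hUΛ : ∀ s, (U s)ᴴ * Λ s = (-Complex.I) • M := by
    intro s
    rw [hconst Λ hΛ s, hU0, hΛ0]; simp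
  have hUUt : ∀ s, U s * (U s)ᴴ = 1 := fun s => mul_eq_one_comm.mp (hUU s)
  have hΛeq : ∀ s, Λ s = (-Complex.I) • (U s * M) := by
    intro s
    have := congrArg (fun A => U s * A) (hUΛ s)
    simpa [← Matrix.mul_assoc, hUUt s, Matrix.mul_smul] using this
  intro s k
  have hΛH : (Λ s)ᴴ = Complex.I • (M * (U s)ᴴ) := by
    rw [hΛeq s, Matrix.conjTranspose_smul, Matrix.conjTranspose_mul, hMherm]
    simp [Complex.star_def]
  have htr : (-Complex.I) • ((Λ s)ᴴ * (Hc k * U s)) = M * (U s)ᴴ * Hc k * U s := by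
    rw [hΛH]
    rw [Matrix.smul_mul, smul_smul]
    simp [Matrix.mul_assoc]
  have hst := hstat s k
  rw [htr] at hst
  have htr2 : Matrix.trace (M * (U s)ᴴ * Hc k * U s)
      = Matrix.trace (U s * M * (U s)ᴴ * Hc k) := by
    rw [Matrix.trace_mul_comm]
    simp [Matrix.mul_assoc]
  rw [htr2] at hst
  have hnorm : ‖u s‖ ≠ 0 := norm_ne_zero_iff.mpr (hune s)
  rw [hst]
  field_simp
end

section
/- (Jacobian–vector product for the MAGICARP end-point map.) Let H₁, …, H_m ∈ M_d(ℂ) be Hermitian and let M, δM ∈ M_d(ℂ) be Hermitian. Let U : [0,1] → M_d(ℂ) be differentiable, unitary-valued, with U(0) = I and U'(t) = −i·Σ_{j=1}^m Re Tr(U(t)†·H_j·U(t)·M)·H_j·U(t); write h_j(t) = U(t)†·H_j·U(t). Let δU : [0,1] → M_d(ℂ) be differentiable with δU(0) = 0 and δU'(t) = −i·[ Σ_{j=1}^m Re Tr( δU(t)†·H_j·U(t)·M + U(t)†·H_j·δU(t)·M + h_j(t)·δM )·H_j·U(t) + Σ_{j=1}^m Re Tr(h_j(t)·M)·H_j·δU(t)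 ]. Then w(t) := i·U(t)†·δU(t) satisfies w(0) = 0 and w'(t) = Σ_{j=1}^m Re Tr( h_j(t)·δM − 2i·M·h_j(t)·w(t) )·h_j(t) for all t ∈ [0,1]; in particular δU(1) = −i·U(1)·w(1). -/
open Matrix

lemma scalar_eq {d : ℕ} (V W H M δM : Matrix (Fin d) (Fin d) ℂ)
    (hH : Hᴴ = H) (hM : Mᴴ = M) (hVV : V * Vᴴ = 1) :
    ((Vᴴ*H*V*δM).trace - ((2*Complex.I) • (M * (Vᴴ*H*V) * (Complex.I • (Vᴴ*W)))).trace).re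
    = ((Wᴴ*H*V*M).trace + (Vᴴ*H*W*M).trace + (Vᴴ*H*V*δM).trace).re := by
  have h1 : M * (Vᴴ*H*V) * (Complex.I • (Vᴴ*W)) = Complex.I • (M * (Vᴴ * (H * W))) := by
    rw [Matrix.mul_smul]
    congr 1
    calc M * (Vᴴ*H*V) * (Vᴴ*W) = M * (Vᴴ * (H * ((V * Vᴴ) * W))) := by
          simp only [Matrix.mul_assoc]
      _ = M * (Vᴴ * (H * W)) := by rw [hVV, Matrix.one_mul]
  have h2 : (M * (Vᴴ * (H * W))).trace = (Vᴴ*H*W*M).trace := by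
    rw [Matrix.trace_mul_comm]; simp [Matrix.mul_assoc]
  have h3 : ((Wᴴ*H*V*M).trace).re = ((Vᴴ*H*W*M).trace).re := by
    have e : (Vᴴ*H*W*M)ᴴ = M * (Wᴴ * (H * V)) := by
      simp [Matrix.conjTranspose_mul, hH, hM, Matrix.mul_assoc]
    have e0 := Matrix.trace_conjTranspose (Vᴴ*H*W*M)
    rw [e] at e0
    have e2 : (M * (Wᴴ * (H * V))).trace = (Wᴴ*H*V*M).trace := by
      rw [Matrix.trace_mul_comm]; simp [Matrix.mul_assoc]
    have e3 : (Wᴴ*H*V*M).trace = star ((Vᴴ*H*W*M).trace) := by rw [← e2, e0]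
    rw [e3]; simp [Complex.star_def]
  rw [h1]
  set T2 := (Vᴴ*H*W*M).trace
  rw [Matrix.trace_smul, Matrix.trace_smul, h2]
  simp only [smul_eq_mul]
  have hI : (2*Complex.I) * (Complex.I * T2) = -2 * T2 := by
    have h := Complex.I_mul_I
    linear_combination 2 * T2 * h
  rw [hI]
  simp only [Complex.sub_re, Complex.add_re, Complex.neg_re, Complex.mul_re]
  simp [h3]; ring

lemma key_matrix {d m : ℕ} (Hc : Fin m → Matrix (Fin d) (Fin d) ℂ)
    (hH : ∀ j, (Hc j)ᴴ = Hc j) (V W : Matrix (Fin d) (Fin d) ℂ) (r s : Fin m → ℝ) :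
    Complex.I • ((((-Complex.I) • ∑ j, r j • (Hc j * V))ᴴ) * W
      + Vᴴ * ((-Complex.I) • ((∑ j, s j • (Hc j * V)) + ∑ j, r j • (Hc j * W))))
    = ∑ j, s j • (Vᴴ * Hc j * V) := by
  have hct : ((-Complex.I) • ∑ j, r j • (Hc j * V))ᴴ
      = Complex.I • ∑ j, r j • (Vᴴ * Hc j) := by
    rw [Matrix.conjTranspose_smul]
    simp [Matrix.conjTranspose_sum, Matrix.conjTranspose_smul, Matrix.conjTranspose_mul, hH]
  rw [hct]
  rw [Matrix.smul_mul, Matrix.mul_smul, smul_add, smul_smul, smul_smul]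
  rw [Complex.I_mul_I, mul_neg, Complex.I_mul_I, neg_neg, one_smul, neg_one_smul]
  rw [Matrix.mul_add, Matrix.mul_sum, Matrix.mul_sum, Matrix.sum_mul]
  have e1 : ∀ j : Fin m, (r j • (Vᴴ * Hc j)) * W = r j • (Vᴴ * (Hc j * W)) := by
    intro j; rw [Matrix.smul_mul, Matrix.mul_assoc]
  have e2 : ∀ j : Fin m, Vᴴ * (r j • (Hc j * W)) = r j • (Vᴴ * (Hc j * W)) := by
    intro j; rw [Matrix.mul_smul]
  have e3 : ∀ j : Fin m, Vᴴ * (s j • (Hc j * V)) = s j • (Vᴴ * Hc j * V) := by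
    intro j; rw [Matrix.mul_smul, Matrix.mul_assoc]
  simp only [e1, e2, e3]
  abel

/-- Jacobian–vector product for the MAGICARP end-point map: the variation `δU` of the
propagator `U` in the direction `δM` satisfies `δU(t) = −i U(t) w(t)` where
`w(t) = i U(t)† δU(t)` solves the linear equation
`w' = Σⱼ Re Tr(hⱼ δM − 2i M hⱼ w) hⱼ`, `w(0) = 0`; in particular
`δU(1) = −i U(1) w(1)`. -/
theorem magicarp_jvp
    (d m : ℕ)
    (Hc : Fin m → Matrix (Fin d) (Fin d) ℂ)
    (hHherm : ∀ j, (Hc j)ᴴ = Hc j)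
    (M δM : Matrix (Fin d) (Fin d) ℂ)
    (hMherm : Mᴴ = M) (hδMherm : δMᴴ = δM)
    (U δU : ℝ → Matrix (Fin d) (Fin d) ℂ)
    (hUunit : ∀ t ∈ Set.Icc (0:ℝ) 1, (U t)ᴴ * U t = 1)
    (hU0 : U 0 = 1)
    (hU : ∀ t ∈ Set.Icc (0:ℝ) 1, ∀ i k : Fin d,
      HasDerivAt (fun s => U s i k)
        (((-Complex.I) • (∑ j : Fin m,
          ((Matrix.trace ((U t)ᴴ * Hc j * U t * M)).re : ℝ) • (Hc j * U t))) i k) t)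
    (hδU0 : δU 0 = 0)
    (hδU : ∀ t ∈ Set.Icc (0:ℝ) 1, ∀ i k : Fin d,
      HasDerivAt (fun s => δU s i k)
        (((-Complex.I) • ((∑ j : Fin m,
            ((Matrix.trace ((δU t)ᴴ * Hc j * U t * M)
              + Matrix.trace ((U t)ᴴ * Hc j * δU t * M)
              + Matrix.trace ((U t)ᴴ * Hc j * U t * δM)).re : ℝ) • (Hc j * U t))
          + ∑ j : Fin m,
            ((Matrix.trace ((U t)ᴴ * Hc j * U t * M)).re : ℝ) • (Hc j * δU t))) i k) t) :
    (fun t => Complex.I • ((U t)ᴴ * δU t)) 0 = 0 ∧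
    (∀ t ∈ Set.Icc (0:ℝ) 1, ∀ i k : Fin d,
      HasDerivAt (fun s => (Complex.I • ((U s)ᴴ * δU s)) i k)
        ((∑ j : Fin m,
          ((Matrix.trace (((U t)ᴴ * Hc j * U t) * δM)
            - Matrix.trace ((2 * Complex.I) •
                (M * ((U t)ᴴ * Hc j * U t) * (Complex.I • ((U t)ᴴ * δU t))))).re : ℝ) •
            ((U t)ᴴ * Hc j * U t)) i k) t) ∧
    δU 1 = (-Complex.I) • (U 1 * (Complex.I • ((U 1)ᴴ * δU 1))) := by
  refine ⟨by simp [hδU0], ?_, ?_⟩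
  · intro t ht i k
    have hVV : U t * (U t)ᴴ = 1 := mul_eq_one_comm.mp (hUunit t ht)
    have hU' := hU t ht
    have hδU' := hδU t ht
    set A' : Matrix (Fin d) (Fin d) ℂ :=
      (-Complex.I) • (∑ j : Fin m,
        ((Matrix.trace ((U t)ᴴ * Hc j * U t * M)).re : ℝ) • (Hc j * U t)) with hA'
    set B' : Matrix (Fin d) (Fin d) ℂ :=
      (-Complex.I) • ((∑ j : Fin m,
            ((Matrix.trace ((δU t)ᴴ * Hc j * U t * M)
              + Matrix.trace ((U t)ᴴ * Hc j * δU t * M)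
              + Matrix.trace ((U t)ᴴ * Hc j * U t * δM)).re : ℝ) • (Hc j * U t))
          + ∑ j : Fin m,
            ((Matrix.trace ((U t)ᴴ * Hc j * U t * M)).re : ℝ) • (Hc j * δU t)) with hB'
    have hw : HasDerivAt (fun s => (Complex.I • ((U s)ᴴ * δU s)) i k)
        ((Complex.I • (A'ᴴ * δU t + (U t)ᴴ * B')) i k) t := by
      have hsum : HasDerivAt (fun s => ∑ l, star (U s l i) * δU s l k)
          (∑ l, (star (A' l i) * δU t l k + star (U t l i) * B' l k)) t :=
        HasDerivAt.fun_sum fun l _ => ((hU' l i).star.mul (hδU' l k))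
      have h2 := hsum.const_mul Complex.I
      have hfun : (fun s => (Complex.I • ((U s)ᴴ * δU s)) i k)
          = fun s => Complex.I * ∑ l, star (U s l i) * δU s l k := by
        funext s
        simp [Matrix.smul_apply, Matrix.mul_apply, Matrix.conjTranspose_apply, smul_eq_mul]
      have hval : (Complex.I • (A'ᴴ * δU t + (U t)ᴴ * B')) i k
          = Complex.I * ∑ l, (star (A' l i) * δU t l k + star (U t l i) * B' l k) := by
        simp [Matrix.smul_apply, Matrix.add_apply, Matrix.mul_apply,
          Matrix.conjTranspose_apply, smul_eq_mul, Finset.sum_add_distrib]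
      rw [hfun, hval]
      exact h2
    have keyeq : (∑ j : Fin m,
          ((Matrix.trace (((U t)ᴴ * Hc j * U t) * δM)
            - Matrix.trace ((2 * Complex.I) •
                (M * ((U t)ᴴ * Hc j * U t) * (Complex.I • ((U t)ᴴ * δU t))))).re : ℝ) •
            ((U t)ᴴ * Hc j * U t))
        = Complex.I • (A'ᴴ * δU t + (U t)ᴴ * B') := by
      rw [hA', hB',
        key_matrix Hc hHherm (U t) (δU t)
          (fun j => (Matrix.trace ((U t)ᴴ * Hc j * U t * M)).re)
          (fun j => (Matrix.trace ((δU t)ᴴ * Hc j * U t * M)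
              + Matrix.trace ((U t)ᴴ * Hc j * δU t * M)
              + Matrix.trace ((U t)ᴴ * Hc j * U t * δM)).re)]
      exact Finset.sum_congr rfl fun j _ => by
        rw [scalar_eq (U t) (δU t) (Hc j) M δM (hHherm j) hMherm hVV]
    rw [keyeq]
    exact hw
  · have h1 : (U 1)ᴴ * U 1 = 1 := hUunit 1 ⟨by norm_num, le_refl 1⟩
    have h1' : U 1 * (U 1)ᴴ = 1 := mul_eq_one_comm.mp h1
    rw [Matrix.mul_smul, smul_smul, neg_mul, Complex.I_mul_I, neg_neg, one_smul,
      ← Matrix.mul_assoc, h1', Matrix.one_mul]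
end

section
/- (Vector–Jacobian product / adjoint-state duality for the MAGICARP end-point map.) Let H₁, …, H_m ∈ M_d(ℂ) be Hermitian, let M, δM ∈ M_d(ℂ) be Hermitian, and let S ∈ M_d(ℂ). Let U : [0,1] → M_d(ℂ) be differentiable, unitary-valued, with U(0) = I and U'(t) = −i·Σ_{j=1}^m Re Tr(U(t)†·H_j·U(t)·M)·H_j·U(t); write h_j(t) = U(t)†·H_j·U(t). Let w : [0,1] → M_d(ℂ) be differentiable with w(0) = 0 and w'(t) = Σ_{j=1}^m Re Tr( h_j(t)·δM − 2i·M·h_j(t)·w(t) )·h_j(t), and let v : [0,1] → M_d(ℂ) be continuously differentiable with v(1) = i·U(1)†·S and v'(t) = −2i·Σ_{j=1}^m Re Tr( h_j(t)·v(t)† )·h_j(t)·M. Then Re Tr( S†·(−i·U(1)·w(1)) ) = Re Tr( R·δM ), where R = Σ_{j=1}^m ∫₀¹ Re Tr( h_j(t)·v(t)† )·h_j(t) dt. -/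
open Matrix

lemma magicarp_key_alg (d m : ℕ) (h : Fin m → Matrix (Fin d) (Fin d) ℂ)
    (hherm : ∀ j, (h j)ᴴ = h j)
    (M δM v w : Matrix (Fin d) (Fin d) ℂ) (hM : Mᴴ = M) :
    (Matrix.trace ((((-(2 * Complex.I)) • (∑ j : Fin m,
        ((Matrix.trace (h j * vᴴ)).re : ℝ) • (h j * M)))ᴴ) * w)
     + Matrix.trace (vᴴ * (∑ j : Fin m,
        ((Matrix.trace (h j * δM)
          - Matrix.trace ((2 * Complex.I) • (M * h j * w))).re : ℝ) • h j))).re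
    = ∑ j : Fin m, (Matrix.trace (h j * vᴴ)).re * (Matrix.trace (h j * δM)).re := by
  have hcomm : ∀ j, Matrix.trace (vᴴ * h j) = Matrix.trace (h j * vᴴ) :=
    fun j => Matrix.trace_mul_comm _ _
  simp only [Matrix.conjTranspose_smul, Matrix.conjTranspose_sum, Matrix.conjTranspose_mul,
    hM, hherm, Matrix.smul_mul, Matrix.sum_mul, Matrix.mul_sum, Matrix.mul_smul,
    Matrix.trace_smul, Matrix.trace_sum, hcomm, smul_eq_mul, Complex.real_smul,
    Complex.add_re, Complex.re_sum, Complex.re_ofReal_mul, Complex.sub_re,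
    smul_smul, Matrix.mul_assoc, star_trivial]
  rw [show star (-(2*Complex.I)) = 2*Complex.I by simp [Complex.star_def],
    Finset.mul_sum, Complex.re_sum, ← Finset.sum_add_distrib]
  apply Finset.sum_congr rfl
  intro j _
  simp [Complex.mul_re, Complex.ofReal_re, Complex.ofReal_im]
  ring

lemma magicarp_trace_ct_mul (d : ℕ) (A B : Matrix (Fin d) (Fin d) ℂ) :
    Matrix.trace (Aᴴ * B) = ∑ i, ∑ k, star (A k i) * B k i := by
  simp [Matrix.trace, Matrix.mul_apply, Matrix.conjTranspose_apply, Matrix.diag]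


lemma magicarp_trace_mul_eq (d : ℕ) (A B : Matrix (Fin d) (Fin d) ℂ) :
    Matrix.trace (A * B) = ∑ i, ∑ k, A i k * B k i := by
  simp [Matrix.trace, Matrix.mul_apply, Matrix.diag]

lemma magicarp_mul_trace (d : ℕ) (z : ℂ) (A B : Matrix (Fin d) (Fin d) ℂ) :
    z * Matrix.trace (A * B) = ∑ i, ∑ k, z * A i k * B k i := by
  simp [Matrix.trace, Matrix.mul_apply, Matrix.diag, Finset.mul_sum, mul_assoc]

lemma magicarp_sum_rot {ι₁ ι₂ ι₃ : Type*} [Fintype ι₁] [Fintype ι₂] [Fintype ι₃]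
    {A : Type*} [AddCommMonoid A] (f : ι₁ → ι₂ → ι₃ → A) :
    ∑ i, ∑ k, ∑ j, f i k j = ∑ j, ∑ i, ∑ k, f i k j :=
  calc ∑ i, ∑ k, ∑ j, f i k j
      = ∑ i, ∑ j, ∑ k, f i k j := Finset.sum_congr rfl (fun _ _ => Finset.sum_comm)
    _ = ∑ j, ∑ i, ∑ k, f i k j := Finset.sum_comm

lemma magicarp_deriv_f (d : ℕ) (v w : ℝ → Matrix (Fin d) (Fin d) ℂ)
    (V' W' : Matrix (Fin d) (Fin d) ℂ) (t : ℝ)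
    (hv : ∀ i k, HasDerivAt (fun s => v s i k) (V' i k) t)
    (hw : ∀ i k, HasDerivAt (fun s => w s i k) (W' i k) t) :
    HasDerivAt (fun s => (Matrix.trace ((v s)ᴴ * w s)).re)
      ((Matrix.trace (V'ᴴ * w t) + Matrix.trace ((v t)ᴴ * W')).re) t := by
  have hF : HasDerivAt (fun s => ∑ i, ∑ k, star (v s k i) * w s k i)
      (∑ i : Fin d, ∑ k : Fin d, (star (V' k i) * w t k i + star (v t k i) * W' k i)) t :=
    HasDerivAt.fun_sum fun i _ => HasDerivAt.fun_sum fun k _ => ((hv k i).star.mul (hw k i))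
  have h2 := Complex.reCLM.hasFDerivAt.comp_hasDerivAt t hF
  have hfun : (fun s => (Matrix.trace ((v s)ᴴ * w s)).re)
      = (⇑Complex.reCLM ∘ fun s => ∑ i, ∑ k, star (v s k i) * w s k i) := by
    funext s; simp [magicarp_trace_ct_mul]
  rw [hfun]
  refine h2.congr_deriv ?_
  simp [magicarp_trace_ct_mul, Complex.re_sum, Finset.sum_add_distrib]

/-- Vector–Jacobian product / adjoint-state duality for the MAGICARP end-point map:
with `w` the linearized state in direction `δM` and `v` the adjoint state with terminal
condition `v(1) = i U(1)† S`, one has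
`Re Tr(S† (−i U(1) w(1))) = Re Tr(R δM)` where
`R = Σⱼ ∫₀¹ Re Tr(hⱼ(t) v(t)†) hⱼ(t) dt` (entrywise integral). -/
theorem magicarp_vjp
    (d m : ℕ)
    (Hc : Fin m → Matrix (Fin d) (Fin d) ℂ)
    (hHherm : ∀ j, (Hc j)ᴴ = Hc j)
    (M δM : Matrix (Fin d) (Fin d) ℂ)
    (hMherm : Mᴴ = M) (hδMherm : δMᴴ = δM)
    (S : Matrix (Fin d) (Fin d) ℂ)
    (U w v : ℝ → Matrix (Fin d) (Fin d) ℂ)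
    (hUunit : ∀ t ∈ Set.Icc (0:ℝ) 1, (U t)ᴴ * U t = 1)
    (hU0 : U 0 = 1)
    (hU : ∀ t ∈ Set.Icc (0:ℝ) 1, ∀ i k : Fin d,
      HasDerivAt (fun s => U s i k)
        (((-Complex.I) • (∑ j : Fin m,
          ((Matrix.trace ((U t)ᴴ * Hc j * U t * M)).re : ℝ) • (Hc j * U t))) i k) t)
    (hw0 : w 0 = 0)
    (hw : ∀ t ∈ Set.Icc (0:ℝ) 1, ∀ i k : Fin d,
      HasDerivAt (fun s => w s i k)
        ((∑ j : Fin m,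
          ((Matrix.trace (((U t)ᴴ * Hc j * U t) * δM)
            - Matrix.trace ((2 * Complex.I) •
                (M * ((U t)ᴴ * Hc j * U t) * w t))).re : ℝ) •
            ((U t)ᴴ * Hc j * U t)) i k) t)
    (hv1 : v 1 = Complex.I • ((U 1)ᴴ * S))
    (hv : ∀ t ∈ Set.Icc (0:ℝ) 1, ∀ i k : Fin d,
      HasDerivAt (fun s => v s i k)
        (((-(2 * Complex.I)) • (∑ j : Fin m,
          ((Matrix.trace (((U t)ᴴ * Hc j * U t) * (v t)ᴴ)).re : ℝ) •
            (((U t)ᴴ * Hc j * U t) * M))) i k) t) :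
    (Matrix.trace (Sᴴ * ((-Complex.I) • (U 1 * w 1)))).re =
      (Matrix.trace ((Matrix.of fun i k : Fin d =>
        ∑ j : Fin m, ∫ t in (0:ℝ)..1,
          (((Matrix.trace (((U t)ᴴ * Hc j * U t) * (v t)ᴴ)).re : ℂ) *
            ((U t)ᴴ * Hc j * U t) i k)) * δM)).re := by
  have hIcc : Set.uIcc (0:ℝ) 1 = Set.Icc 0 1 := Set.uIcc_of_le zero_le_one
  -- continuity of the states on [0,1]
  have hUc : ContinuousOn U (Set.Icc (0:ℝ) 1) := by
    refine continuousOn_pi.2 fun i => continuousOn_pi.2 fun k => fun t ht => ?_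
    exact ((hU t ht i k).continuousAt).continuousWithinAt
  have hvc : ContinuousOn v (Set.Icc (0:ℝ) 1) := by
    refine continuousOn_pi.2 fun i => continuousOn_pi.2 fun k => fun t ht => ?_
    exact ((hv t ht i k).continuousAt).continuousWithinAt
  have hwc : ContinuousOn w (Set.Icc (0:ℝ) 1) := by
    refine continuousOn_pi.2 fun i => continuousOn_pi.2 fun k => fun t ht => ?_
    exact ((hw t ht i k).continuousAt).continuousWithinAt
  have hhc : ∀ j, ContinuousOn (fun t => (U t)ᴴ * Hc j * U t) (Set.Icc (0:ℝ) 1) := by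
    intro j
    exact (((continuous_id.matrix_conjTranspose).comp_continuousOn hUc).mul
      continuousOn_const).mul hUc
  have hcc : ∀ j, ContinuousOn
      (fun t => (Matrix.trace (((U t)ᴴ * Hc j * U t) * (v t)ᴴ)).re) (Set.Icc (0:ℝ) 1) := by
    intro j
    exact Complex.continuous_re.comp_continuousOn
      ((Continuous.matrix_trace continuous_id).comp_continuousOn
        ((hhc j).mul ((continuous_id.matrix_conjTranspose).comp_continuousOn hvc)))
  have hrc : ∀ j, ContinuousOn
      (fun t => (Matrix.trace (((U t)ᴴ * Hc j * U t) * δM)).re) (Set.Icc (0:ℝ) 1) := by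
    intro j
    exact Complex.continuous_re.comp_continuousOn
      ((Continuous.matrix_trace continuous_id).comp_continuousOn
        ((hhc j).mul continuousOn_const))
  -- derivative of the pairing  t ↦ Re Tr(v(t)ᴴ w(t))
  have hder : ∀ t ∈ Set.Icc (0:ℝ) 1,
      HasDerivAt (fun s => (Matrix.trace ((v s)ᴴ * w s)).re)
        (∑ j : Fin m, (Matrix.trace (((U t)ᴴ * Hc j * U t) * (v t)ᴴ)).re *
          (Matrix.trace (((U t)ᴴ * Hc j * U t) * δM)).re) t := by
    intro t ht
    have hherm : ∀ j, ((U t)ᴴ * Hc j * U t)ᴴ = (U t)ᴴ * Hc j * U t := by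
      intro j
      simp [Matrix.conjTranspose_mul, hHherm j, Matrix.mul_assoc]
    have hD := magicarp_deriv_f d v w _ _ t (hv t ht) (hw t ht)
    rwa [magicarp_key_alg d m (fun j => (U t)ᴴ * Hc j * U t) hherm M δM (v t) (w t) hMherm]
      at hD
  -- integrability
  have hint1 : ∀ j : Fin m, IntervalIntegrable
      (fun t => (Matrix.trace (((U t)ᴴ * Hc j * U t) * (v t)ᴴ)).re *
        (Matrix.trace (((U t)ᴴ * Hc j * U t) * δM)).re) MeasureTheory.volume 0 1 := by
    intro j
    apply ContinuousOn.intervalIntegrable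
    rw [hIcc]
    exact (hcc j).mul (hrc j)
  have hint : IntervalIntegrable
      (fun t => ∑ j : Fin m, (Matrix.trace (((U t)ᴴ * Hc j * U t) * (v t)ᴴ)).re *
        (Matrix.trace (((U t)ᴴ * Hc j * U t) * δM)).re) MeasureTheory.volume 0 1 := by
    apply ContinuousOn.intervalIntegrable
    rw [hIcc]
    exact continuousOn_finset_sum _ fun j _ => (hcc j).mul (hrc j)
  -- FTC
  have hFTC := intervalIntegral.integral_eq_sub_of_hasDerivAt
    (f := fun s => (Matrix.trace ((v s)ᴴ * w s)).re) (fun t ht => hder t (hIcc ▸ ht)) hint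
  have hf0 : (Matrix.trace ((v 0)ᴴ * w 0)).re = 0 := by simp [hw0]
  have hLHS : (Matrix.trace ((v 1)ᴴ * w 1)).re
      = (Matrix.trace (Sᴴ * ((-Complex.I) • (U 1 * w 1)))).re := by
    rw [hv1]
    simp [Matrix.conjTranspose_smul, Complex.star_def, Complex.conj_I,
      Matrix.conjTranspose_mul, Matrix.smul_mul, Matrix.mul_smul, Matrix.trace_smul,
      Matrix.mul_assoc]
  -- the right-hand side as a sum of integrals
  have hintC : ∀ j : Fin m, IntervalIntegrable
      (fun t => ((Matrix.trace (((U t)ᴴ * Hc j * U t) * (v t)ᴴ)).re : ℂ) *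
        Matrix.trace (((U t)ᴴ * Hc j * U t) * δM)) MeasureTheory.volume 0 1 := by
    intro j
    apply ContinuousOn.intervalIntegrable
    rw [hIcc]
    exact (Complex.continuous_ofReal.comp_continuousOn (hcc j)).mul
      ((Continuous.matrix_trace continuous_id).comp_continuousOn
        ((hhc j).mul continuousOn_const))
  have hcontE : ∀ (j : Fin m) (i k : Fin d), ContinuousOn
      (fun t => ((Matrix.trace (((U t)ᴴ * Hc j * U t) * (v t)ᴴ)).re : ℂ) *
        ((U t)ᴴ * Hc j * U t) i k) (Set.Icc (0:ℝ) 1) := by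
    intro j i k
    exact (Complex.continuous_ofReal.comp_continuousOn (hcc j)).mul
      (continuousOn_pi.1 (continuousOn_pi.1 (hhc j) i) k)
  have step1 : Matrix.trace ((Matrix.of fun i k : Fin d =>
        ∑ j : Fin m, ∫ t in (0:ℝ)..1,
          (((Matrix.trace (((U t)ᴴ * Hc j * U t) * (v t)ᴴ)).re : ℂ) *
            ((U t)ᴴ * Hc j * U t) i k)) * δM)
      = ∑ j : Fin m, ∫ t in (0:ℝ)..1,
          (((Matrix.trace (((U t)ᴴ * Hc j * U t) * (v t)ᴴ)).re : ℂ) *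
            Matrix.trace (((U t)ᴴ * Hc j * U t) * δM)) := by
    have hR : ∀ j : Fin m, (∫ t in (0:ℝ)..1,
          (((Matrix.trace (((U t)ᴴ * Hc j * U t) * (v t)ᴴ)).re : ℂ) *
            Matrix.trace (((U t)ᴴ * Hc j * U t) * δM)))
        = ∑ i : Fin d, ∑ k : Fin d, (∫ t in (0:ℝ)..1,
            (((Matrix.trace (((U t)ᴴ * Hc j * U t) * (v t)ᴴ)).re : ℂ) *
              ((U t)ᴴ * Hc j * U t) i k)) * δM k i := by
      intro j
      rw [show (fun t => ((Matrix.trace (((U t)ᴴ * Hc j * U t) * (v t)ᴴ)).re : ℂ) *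
            Matrix.trace (((U t)ᴴ * Hc j * U t) * δM))
          = fun t => ∑ i : Fin d, ∑ k : Fin d,
            ((((Matrix.trace (((U t)ᴴ * Hc j * U t) * (v t)ᴴ)).re : ℂ) *
              ((U t)ᴴ * Hc j * U t) i k) * δM k i) from funext fun t =>
        magicarp_mul_trace d _ _ _]
      rw [intervalIntegral.integral_finset_sum (fun i _ => by
        apply ContinuousOn.intervalIntegrable
        rw [hIcc]
        exact continuousOn_finset_sum _ fun k _ => (hcontE j i k).mul continuousOn_const)]
      refine Finset.sum_congr rfl fun i _ => ?_
      rw [intervalIntegral.integral_finset_sum (fun k _ => by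
        apply ContinuousOn.intervalIntegrable
        rw [hIcc]
        exact (hcontE j i k).mul continuousOn_const)]
      exact Finset.sum_congr rfl fun k _ => intervalIntegral.integral_mul_const _ _
    rw [magicarp_trace_mul_eq]
    simp only [Matrix.of_apply, Finset.sum_mul]
    rw [magicarp_sum_rot]
    exact Finset.sum_congr rfl fun j _ => (hR j).symm
  have hRHS : (Matrix.trace ((Matrix.of fun i k : Fin d =>
        ∑ j : Fin m, ∫ t in (0:ℝ)..1,
          (((Matrix.trace (((U t)ᴴ * Hc j * U t) * (v t)ᴴ)).re : ℂ) *
            ((U t)ᴴ * Hc j * U t) i k)) * δM)).re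
      = ∑ j : Fin m, ∫ t in (0:ℝ)..1,
          (Matrix.trace (((U t)ᴴ * Hc j * U t) * (v t)ᴴ)).re *
            (Matrix.trace (((U t)ᴴ * Hc j * U t) * δM)).re := by
    rw [step1, Complex.re_sum]
    refine Finset.sum_congr rfl fun j _ => ?_
    rw [← Complex.reCLM_apply, ← Complex.reCLM.intervalIntegral_comp_comm (hintC j)]
    refine intervalIntegral.integral_congr fun t _ => ?_
    simp [Complex.re_ofReal_mul]
  have hFTC' : (∫ t in (0:ℝ)..1, ∑ j : Fin m,
      (Matrix.trace (((U t)ᴴ * Hc j * U t) * (v t)ᴴ)).re *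
        (Matrix.trace (((U t)ᴴ * Hc j * U t) * δM)).re)
      = (Matrix.trace ((v 1)ᴴ * w 1)).re - (Matrix.trace ((v 0)ᴴ * w 0)).re := hFTC
  rw [hRHS, ← intervalIntegral.integral_finset_sum (fun j _ => hint1 j), hFTC', hf0, sub_zero]
  exact hLHS.symm
end
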